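/- arXiv:2402.05535 — 2 statements merged into one kernel-verified Lean document; each statement's English description precedes it below -/
import Mathlib

section
/- Let G = (V, E) be a finite undirected graph and D = (V, S) a DAG that is a valid schedule for G (for each edge of G there is a directed path in D between its endpoints in some direction). If the longest directed path in D has k vertices, then the chromatic number of G is at most k. -/
/-- A (nonempty, simple) directed path in the digraph with edge relation `S`,
represented as a list of vertices. -/
def IsDipath {V : Type*} (S : V → V → Prop) (l : List V) : Prop :=
  l ≠ [] ∧ l.Nodup ∧ l.Chain' S

/-- The depth of a digraph: the maximum number of vertices on a directed path. -/
noncomputable def depthD {V : Type*} (S : V → V → Prop) : ℕ :=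
  sSup {n | ∃ l : List V, IsDipath S l ∧ l.length = n}

/-- The depth of a vertex: the maximum number of vertices on a directed path ending at `v`. -/
noncomputable def vdepth {V : Type*} (S : V → V → Prop) (v : V) : ℕ :=
  sSup {n | ∃ l : List V, IsDipath S l ∧ l.getLast? = some v ∧ l.length = n}

/-- The weighted depth (latency): the maximum over directed paths of the sum of
vertex weights along the path. -/
noncomputable def wdepth {V : Type*} (S : V → V → Prop) (len : V → ℕ+) : ℕ :=
  sSup {n | ∃ l : List V, IsDipath S l ∧ (l.map fun v => (len v : ℕ)).sum = n}

/-- Acyclicity of a digraph (a DAG). -/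
def Acyclic {V : Type*} (S : V → V → Prop) : Prop :=
  ∀ v : V, ¬ Relation.TransGen S v v

/-- A valid schedule for the conflict graph `G`: an acyclic digraph on the same
vertices such that every edge of `G` is connected by a directed path in some direction. -/
def ValidSchedule {V : Type*} (G : SimpleGraph V) (S : V → V → Prop) : Prop :=
  Acyclic S ∧ ∀ u v : V, G.Adj u v →
    Relation.TransGen S u v ∨ Relation.TransGen S v u

/-! Colour each vertex by the number of vertices on a longest directed path ending at it. This
value lies in `[1, depthD S]` and strictly increases along every arc, since a longest path into `u`
extends by an arc `u → v` to a path into `v` (acyclicity keeps it simple). A valid schedule joins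
the endpoints of every edge of `G` by a directed path, so adjacent vertices get distinct colours. -/

section Dipath

variable {V : Type*} {S : V → V → Prop}

theorem Acyclic.nodup_of_isChain (hS : Acyclic S) {l : List V} (hl : l.IsChain S) : l.Nodup :=
  (List.isChain_iff_pairwise.mp (hl.imp fun _ _ => Relation.TransGen.single)).imp
    fun {a _} h hab => by subst hab; exact hS a h

theorem isDipath_singleton (v : V) : IsDipath S [v] :=
  ⟨List.cons_ne_nil v [], List.nodup_singleton v, List.isChain_singleton v⟩

end Dipath

section VertexDepth

variable {V : Type*} [Fintype V] {S : V → V → Prop}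

theorem IsDipath.length_le_card {l : List V} (h : IsDipath S l) : l.length ≤ Fintype.card V :=
  h.2.1.length_le_card

theorem bddAbove_dipath_lengths (P : List V → Prop) :
    BddAbove {n | ∃ l : List V, IsDipath S l ∧ P l ∧ l.length = n} :=
  ⟨Fintype.card V, fun _ ⟨_, hl, _, hlen⟩ => hlen ▸ hl.length_le_card⟩

theorem exists_isDipath_length_eq_vdepth (v : V) :
    ∃ l : List V, IsDipath S l ∧ l.getLast? = some v ∧ l.length = vdepth S v :=
  Nat.sSup_mem (s := {n | ∃ l : List V, IsDipath S l ∧ l.getLast? = some v ∧ l.length = n})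
    ⟨1, [v], isDipath_singleton v, rfl, rfl⟩ (bddAbove_dipath_lengths _)

theorem length_le_vdepth {l : List V} {v : V} (hl : IsDipath S l) (hv : l.getLast? = some v) :
    l.length ≤ vdepth S v :=
  le_csSup (bddAbove_dipath_lengths _) ⟨l, hl, hv, rfl⟩

theorem one_le_vdepth (v : V) : 1 ≤ vdepth S v :=
  length_le_vdepth (isDipath_singleton v) rfl

theorem vdepth_le_depthD (v : V) : vdepth S v ≤ depthD S := by
  obtain ⟨l, hl, -, hlen⟩ := exists_isDipath_length_eq_vdepth (S := S) v
  have hbdd : BddAbove {n | ∃ l : List V, IsDipath S l ∧ l.length = n} := by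
    simpa using bddAbove_dipath_lengths (S := S) fun _ => True
  exact hlen ▸ le_csSup hbdd ⟨l, hl, rfl⟩

theorem Acyclic.vdepth_lt_of_rel (hS : Acyclic S) {u v : V} (huv : S u v) :
    vdepth S u < vdepth S v := by
  obtain ⟨l, hl, hlast, hlen⟩ := exists_isDipath_length_eq_vdepth (S := S) u
  have hchain : (l ++ [v]).IsChain S :=
    hl.2.2.append (List.isChain_singleton v) fun x hx y hy => by simp_all
  have hext : IsDipath S (l ++ [v]) := ⟨by simp, hS.nodup_of_isChain hchain, hchain⟩
  have := length_le_vdepth hext List.getLast?_concat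
  simp only [List.length_append, List.length_singleton] at this
  omega

theorem Acyclic.vdepth_lt_of_transGen (hS : Acyclic S) {u v : V}
    (huv : Relation.TransGen S u v) : vdepth S u < vdepth S v := by
  induction huv with
  | single h => exact hS.vdepth_lt_of_rel h
  | tail _ h ih => exact ih.trans (hS.vdepth_lt_of_rel h)

end VertexDepth

namespace ValidSchedule

variable {V : Type*} [Fintype V] {G : SimpleGraph V} {S : V → V → Prop}

theorem vdepth_ne_of_adj (hvalid : ValidSchedule G S) {u v : V} (hadj : G.Adj u v) :
    vdepth S u ≠ vdepth S v := by
  rcases hvalid.2 u v hadj with h | h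
  · exact (hvalid.1.vdepth_lt_of_transGen h).ne
  · exact (hvalid.1.vdepth_lt_of_transGen h).ne'

theorem colorable_depthD (hvalid : ValidSchedule G S) : G.Colorable (depthD S) := by
  refine (SimpleGraph.colorable_iff_exists_bdd_nat_coloring _).mpr
    ⟨SimpleGraph.Coloring.mk (fun v => vdepth S v - 1) fun {u v} hadj heq => ?_, fun v => ?_⟩
  · have := hvalid.vdepth_ne_of_adj hadj
    have := one_le_vdepth (S := S) u
    have := one_le_vdepth (S := S) v
    omega
  · have := one_le_vdepth (S := S) v
    have := vdepth_le_depthD (S := S) v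
    show vdepth S v - 1 < depthD S
    omega

end ValidSchedule

theorem stmt1 {V : Type*} [Fintype V] (G : SimpleGraph V) (S : V → V → Prop) (k : ℕ)
    (hvalid : ValidSchedule G S) (hdepth : depthD S = k) :
    G.chromaticNumber ≤ (k : ℕ∞) :=
  hdepth ▸ hvalid.colorable_depthD.chromaticNumber_le
end

section
/- There exists a finite undirected graph G with a weight function ℓ : V → ℕ+ and two proper k-colorings c₁ and c₂ of G using the same minimum number of colors k = χ(G), such that the weighted depths of the level-schedule DAGs induced by c₁ and c₂ (orienting edges from lower to higher color, weighted depth = max over directed paths of sum of vertex weights) are different. In particular, for heterogeneous (weighted) vertices, minimal colorings do not all yield the same latency. -/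
/-!
Take a triangle `0, 1, 2` with a pendant vertex `3` of weight `2` attached to `0`, all other
weights being `1`; its chromatic number is `3`. Colouring `0, 1, 2, 3` with `0, 1, 2, 1` makes `3`
a successor of `0`, and every directed path weighs at most `3`; colouring them with `1, 0, 2, 0`
makes `3` a predecessor of `0`, and the path `3 → 0 → 2` weighs `4`. Upper bounds on path weights
are certified by a potential `Ψ` that drops by at least the weight of `u` along every arc `u → v`.
-/

section Potential

variable {V : Type*} {S : V → V → Prop}

theorem sum_map_le_of_isChain_cons {w Ψ : V → ℕ} (hw : ∀ v, w v ≤ Ψ v)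
    (hS : ∀ u v, S u v → w u + Ψ v ≤ Ψ u) {a : V} {t : List V} (h : (a :: t).IsChain S) :
    ((a :: t).map w).sum ≤ Ψ a := by
  induction t generalizing a with
  | nil => simpa using hw a
  | cons b t ih =>
    rw [List.isChain_cons_cons] at h
    have hb := ih h.2
    simp only [List.map_cons, List.sum_cons] at hb ⊢
    have := hS a b h.1
    omega

theorem wdepth_eq_of_potential {len : V → ℕ+} {Ψ : V → ℕ} {m : ℕ}
    (hlen : ∀ v, (len v : ℕ) ≤ Ψ v) (hS : ∀ u v, S u v → (len u : ℕ) + Ψ v ≤ Ψ u)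
    (hΨ : ∀ v, Ψ v ≤ m) {l : List V} (hl : IsDipath S l)
    (hm : (l.map fun v => (len v : ℕ)).sum = m) :
    wdepth S len = m := by
  have hub : ∀ n ∈ {n | ∃ l : List V, IsDipath S l ∧ (l.map fun v => (len v : ℕ)).sum = n},
      n ≤ m := by
    rintro _ ⟨_ | ⟨a, t⟩, ⟨hne, -, hchain⟩, rfl⟩
    · exact absurd rfl hne
    · exact (sum_map_le_of_isChain_cons hlen hS hchain).trans (hΨ a)
  exact le_antisymm (csSup_le ⟨m, l, hl, hm⟩ hub) (le_csSup ⟨m, hub⟩ ⟨l, hl, hm⟩)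

end Potential

theorem SimpleGraph.chromaticNumber_eq_of_isNClique_of_colorable {V : Type*}
    {G : SimpleGraph V} {n : ℕ} {s : Finset V} (hs : G.IsNClique n s) (hc : G.Colorable n) :
    G.chromaticNumber = n :=
  le_antisymm hc.chromaticNumber_le (hs.card_eq ▸ hs.isClique.card_le_chromaticNumber)

namespace PendantTriangle

def graph : SimpleGraph (Fin 4) :=
  SimpleGraph.fromRel fun u v => (u, v) ∈ [(0, 1), (0, 2), (1, 2), (0, 3)]

instance : DecidableRel graph.Adj := fun _ _ => inferInstanceAs (Decidable (_ ∧ _))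

def weight : Fin 4 → ℕ+ := ![1, 1, 1, 2]

def coloring₁ : Fin 4 → Fin 3 := ![0, 1, 2, 1]

def coloring₂ : Fin 4 → Fin 3 := ![1, 0, 2, 0]

theorem coloring₁_proper : ∀ u v, graph.Adj u v → coloring₁ u ≠ coloring₁ v := by decide

theorem coloring₂_proper : ∀ u v, graph.Adj u v → coloring₂ u ≠ coloring₂ v := by decide

theorem chromaticNumber_graph : graph.chromaticNumber = 3 :=
  SimpleGraph.chromaticNumber_eq_of_isNClique_of_colorable (s := {0, 1, 2})
    (SimpleGraph.is3Clique_triple_iff.2 (by decide))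
    ⟨.mk coloring₁ (coloring₁_proper _ _)⟩

-- In both cases `Ψ v` is the weight of the heaviest directed path starting at `v`.
theorem wdepth_coloring₁ :
    wdepth (fun u v => graph.Adj u v ∧ coloring₁ u < coloring₁ v) weight = 3 :=
  wdepth_eq_of_potential (Ψ := ![3, 2, 1, 2]) (by decide) (by decide) (by decide)
    (l := [0, 1, 2]) ⟨by simp, by decide, by change List.IsChain _ _; decide⟩ (by decide)

theorem wdepth_coloring₂ :
    wdepth (fun u v => graph.Adj u v ∧ coloring₂ u < coloring₂ v) weight = 4 :=
  wdepth_eq_of_potential (Ψ := ![2, 3, 1, 4]) (by decide) (by decide) (by decide)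
    (l := [3, 0, 2]) ⟨by simp, by decide, by change List.IsChain _ _; decide⟩ (by decide)

end PendantTriangle

theorem stmt15 :
    ∃ (V : Type) (_ : Fintype V) (G : SimpleGraph V) (len : V → ℕ+) (k : ℕ)
      (c₁ c₂ : V → Fin k),
      (∀ u v : V, G.Adj u v → c₁ u ≠ c₁ v) ∧
      (∀ u v : V, G.Adj u v → c₂ u ≠ c₂ v) ∧
      G.chromaticNumber = (k : ℕ∞) ∧
      wdepth (fun u v => G.Adj u v ∧ c₁ u < c₁ v) len ≠
        wdepth (fun u v => G.Adj u v ∧ c₂ u < c₂ v) len :=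
  open PendantTriangle in
  ⟨Fin 4, inferInstance, graph, weight, 3, coloring₁, coloring₂, coloring₁_proper,
    coloring₂_proper, chromaticNumber_graph, by rw [wdepth_coloring₁, wdepth_coloring₂]; decide⟩
end
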